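/- arXiv:2104.04009 — 4 statements merged into one kernel-verified Lean document; each statement's English description precedes it below -/
import Mathlib

section
/- Lemma (representing measures, Lemma 3.2). If Π extends to a bounded operator on L¹(X,μ), then for every x ∈ X there exists Φ_x ∈ M₀ such that Φ_x(conj f) = conj(f(x)) for every f ∈ C(X,ℂ) whose L²(X,μ)-class belongs to H; equivalently, there is σ_x ∈ M₀ (viewed as a regular complex Borel measure) with ∫_X f d(conj σ_x) = f(x) for all such f. -/
open MeasureTheory
open scoped NNReal ENNReal ComplexConjugate

open Filter Topology TopologicalSpace

/-!
For an open neighbourhood `V` of `x` let `u_V = μ(V)⁻¹ 𝟙_V`, a unit vector of `L¹`. The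
functionals `J (Π u_V)` lie in `J(H)` and, by the `L¹`-boundedness of `Π`, in a fixed ball of
`C(X)*`, so by Banach–Alaoglu they have a weak-* cluster point `Φ` as `V` shrinks to `x`.
For continuous `f` with class in `H` we have `⟪Π u_V, f⟫ = ⟪u_V, f⟫`, hence
`J (Π u_V) (conj f) = conj ⟪u_V, f⟫ = conj (⨍_V f)`, which tends to `conj (f x)`.
-/

theorem ClusterPt.apply_eq_of_tendsto {ι α β : Type*} [TopologicalSpace α] [TopologicalSpace β]
    [T2Space β] {l : Filter ι} {G : ι → α} {a : α} {g : α → β} {b : β}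
    (ha : ClusterPt a (Filter.map G l)) (hg : ContinuousAt g a) (h : Tendsto (g ∘ G) l (𝓝 b)) :
    g a = b :=
  eq_of_nhds_neBot ((ha.map hg tendsto_map).mono (by rwa [map_map]))

theorem ClusterPt.mem_closure_of_forall_mem {ι α : Type*} [TopologicalSpace α] {l : Filter ι}
    {G : ι → α} {a : α} {S : Set α} (ha : ClusterPt a (Filter.map G l)) (hS : ∀ i, G i ∈ S) :
    a ∈ closure S :=
  mem_closure_iff_clusterPt.mpr <|
    ha.mono (le_principal_iff.mpr (mem_map.mpr (Eventually.of_forall hS)))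

theorem TopologicalSpace.OpenNhdsOf.tendsto_atBot_smallSets {X : Type*} [TopologicalSpace X]
    (x : X) : Tendsto ((↑) : OpenNhdsOf x → Set X) atBot (𝓝 x).smallSets := by
  refine tendsto_smallSets_iff.mpr fun t ht => ?_
  obtain ⟨U, hUt, hU, hxU⟩ := mem_nhds_iff.mp ht
  exact eventually_atBot.mpr
    ⟨⟨⟨U, hU⟩, hxU⟩, fun V (hV : V ≤ _) => (SetLike.coe_subset_coe.mpr hV).trans hUt⟩

theorem ContinuousAt.tendsto_setAverage {ι X E : Type*} [TopologicalSpace X]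
    [MeasurableSpace X] [OpensMeasurableSpace X] [NormedAddCommGroup E] [NormedSpace ℝ E]
    [CompleteSpace E] {μ : Measure X} [IsLocallyFiniteMeasure μ] {x : X} {f : X → E}
    (hf : ContinuousAt f x) (hfm : StronglyMeasurableAtFilter f (𝓝 x) μ) {s : ι → Set X}
    {l : Filter ι} (hs : Tendsto s l (𝓝 x).smallSets) (hs₀ : ∀ᶠ i in l, μ (s i) ≠ 0) :
    Tendsto (fun i => ⨍ y in s i, f y ∂μ) l (𝓝 (f x)) := by
  obtain ⟨U, hU, hUfin⟩ := μ.finiteAt_nhds x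
  have hsfin : ∀ᶠ i in l, μ (s i) ≠ ∞ :=
    (hs.eventually (eventually_smallSets_subset.mpr hU)).mono fun _ h =>
      (measure_mono h).trans_lt hUfin |>.ne
  have h := (hf.integral_sub_linear_isLittleO_ae hfm hs).tendsto_inv_smul_nhds_zero
  refine (zero_add (f x) ▸ h.add_const (f x)).congr' ?_
  filter_upwards [hs₀, hsfin] with i h₀ hfin
  have hpos : μ.real (s i) ≠ 0 := ENNReal.toReal_ne_zero.mpr ⟨h₀, hfin⟩
  rw [smul_sub, smul_smul, inv_mul_cancel₀ hpos, one_smul, setAverage_eq, sub_add_cancel]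

namespace MeasureTheory

section ContinuousMapDual

variable {X 𝕜 : Type*} [TopologicalSpace X] [CompactSpace X] [MeasurableSpace X]
  [RCLike 𝕜] {μ : Measure X} {g : X → 𝕜}

theorem norm_integral_mul_le_eLpNorm_one_mul (hg : Integrable g μ) (φ : C(X, 𝕜)) :
    ‖∫ y, φ y * g y ∂μ‖ ≤ (eLpNorm g 1 μ).toReal * ‖φ‖ :=
  calc ‖∫ y, φ y * g y ∂μ‖ ≤ ∫ y, ‖φ‖ * ‖g y‖ ∂μ :=
        norm_integral_le_of_norm_le (hg.norm.const_mul _) <| ae_of_all _ fun y => by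
          rw [norm_mul]; gcongr; exact φ.norm_coe_le_norm y
    _ = (eLpNorm g 1 μ).toReal * ‖φ‖ := by
        rw [integral_const_mul, integral_norm_eq_lintegral_enorm hg.aestronglyMeasurable,
          ← eLpNorm_one_eq_lintegral_enorm, mul_comm]

variable [OpensMeasurableSpace X]

theorem Integrable.integrable_continuousMap_mul (hg : Integrable g μ) (φ : C(X, 𝕜)) :
    Integrable (fun y => φ y * g y) μ :=
  hg.bdd_mul φ.continuous.aestronglyMeasurable (ae_of_all _ φ.norm_coe_le_norm)

/-- The functional `J g` of the paper. -/
noncomputable def Integrable.toContinuousMapDual (hg : Integrable g μ) :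
    StrongDual 𝕜 C(X, 𝕜) :=
  LinearMap.mkContinuous
    { toFun := fun φ => ∫ y, φ y * g y ∂μ
      map_add' := fun φ ψ => by
        simp only [ContinuousMap.add_apply, add_mul]
        exact integral_add (hg.integrable_continuousMap_mul φ) (hg.integrable_continuousMap_mul ψ)
      map_smul' := fun c φ => by
        simp only [ContinuousMap.smul_apply, smul_eq_mul, mul_assoc, RingHom.id_apply]
        exact integral_const_mul c _ }
    (eLpNorm g 1 μ).toReal (norm_integral_mul_le_eLpNorm_one_mul hg)

theorem Integrable.toContinuousMapDual_apply (hg : Integrable g μ) (φ : C(X, 𝕜)) :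
    hg.toContinuousMapDual φ = ∫ y, φ y * g y ∂μ := rfl

theorem Integrable.norm_toContinuousMapDual_le (hg : Integrable g μ) :
    ‖hg.toContinuousMapDual‖ ≤ (eLpNorm g 1 μ).toReal :=
  LinearMap.mkContinuous_norm_le _ ENNReal.toReal_nonneg _

end ContinuousMapDual

section L2

variable {X 𝕜 : Type*} [TopologicalSpace X] [CompactSpace X] [MeasurableSpace X]
  [BorelSpace X] [RCLike 𝕜] {μ : Measure X} [IsFiniteMeasure μ]

theorem toContinuousMapDual_star_eq_inner {g : Lp 𝕜 2 μ} (hg : Integrable g μ) (f : C(X, 𝕜)) :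
    hg.toContinuousMapDual (star f) = inner 𝕜 (ContinuousMap.toLp 2 μ 𝕜 f) g := by
  rw [Integrable.toContinuousMapDual_apply, L2.inner_def]
  refine integral_congr_ae ?_
  filter_upwards [ContinuousMap.coeFn_toLp (p := 2) μ (𝕜 := 𝕜) f] with y hy
  rw [RCLike.inner_apply', hy, ContinuousMap.star_apply, RCLike.star_def]

end L2

section AverageLp

variable {X 𝕜 : Type*} [MeasurableSpace X] [RCLike 𝕜] {μ : Measure X} {s : Set X}

noncomputable def averageIndicatorLp (p : ℝ≥0∞) (μ : Measure X) (hs : MeasurableSet s)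
    (hμs : μ s ≠ ∞) : Lp 𝕜 p μ :=
  indicatorConstLp p hs hμs (((μ.real s)⁻¹ : ℝ) : 𝕜)

theorem eLpNorm_one_averageIndicatorLp {p : ℝ≥0∞} (hs : MeasurableSet s) (hμs : μ s ≠ ∞)
    (hμs₀ : μ s ≠ 0) :
    eLpNorm (averageIndicatorLp (𝕜 := 𝕜) p μ hs hμs) 1 μ = 1 := by
  rw [averageIndicatorLp, eLpNorm_congr_ae indicatorConstLp_coeFn,
    eLpNorm_indicator_const hs one_ne_zero ENNReal.one_ne_top, ENNReal.toReal_one, div_one,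
    ENNReal.rpow_one, ← ofReal_norm, RCLike.norm_ofReal,
    abs_of_nonneg (inv_nonneg.mpr measureReal_nonneg), measureReal_def,
    ENNReal.ofReal_inv_of_pos (ENNReal.toReal_pos hμs₀ hμs), ENNReal.ofReal_toReal hμs,
    ENNReal.inv_mul_cancel hμs₀ hμs]

theorem inner_averageIndicatorLp (hs : MeasurableSet s) (hμs : μ s ≠ ∞) (f : Lp 𝕜 2 μ) :
    inner 𝕜 (averageIndicatorLp 2 μ hs hμs) f = ⨍ y in s, f y ∂μ := by
  rw [averageIndicatorLp, L2.inner_indicatorConstLp_eq_inner_setIntegral, setAverage_eq,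
    RCLike.inner_apply', RCLike.conj_ofReal, RCLike.real_smul_eq_coe_mul]

end AverageLp

end MeasureTheory

theorem stmt_2_general
    {X : Type*} [TopologicalSpace X] [CompactSpace X]
    [MeasurableSpace X] [BorelSpace X]
    (μ : Measure X) [IsFiniteMeasure μ] [μ.IsOpenPosMeasure]
    (H : Submodule ℂ (Lp ℂ 2 μ))
    (P : Lp ℂ 2 μ → Lp ℂ 2 μ)
    (hPmem : ∀ f, P f ∈ H)
    (hPorth : ∀ f : Lp ℂ 2 μ, ∀ g ∈ H, (inner ℂ (f - P f) g : ℂ) = 0)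
    (hbdd : ∃ C : ℝ≥0, ∀ f : Lp ℂ 2 μ,
        eLpNorm (↑↑(P f) : X → ℂ) 1 μ ≤ (C : ℝ≥0∞) * eLpNorm (↑↑f : X → ℂ) 1 μ) :
    ∀ x : X, ∃ Φ ∈ closure {Φ : WeakDual ℂ C(X, ℂ) |
        ∃ g ∈ H, ∀ φ : C(X, ℂ), Φ φ = ∫ y, φ y * (↑↑g : X → ℂ) y ∂μ},
      ∀ f : C(X, ℂ), (ContinuousMap.toLp 2 μ ℂ f : Lp ℂ 2 μ) ∈ H →
        Φ (star f) = conj (f x) := by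
  obtain ⟨C, hC⟩ := hbdd
  intro x
  let u : OpenNhdsOf x → Lp ℂ 2 μ := fun V =>
    averageIndicatorLp 2 μ V.isOpen.measurableSet (measure_ne_top μ V)
  have hint : ∀ V, Integrable (P (u V)) μ := fun V => (Lp.memLp _).integrable one_le_two
  let G : OpenNhdsOf x → WeakDual ℂ C(X, ℂ) := fun V =>
    StrongDual.toWeakDual (hint V).toContinuousMapDual
  have hGball : ∀ V, G V ∈ WeakDual.toStrongDual ⁻¹' Metric.closedBall 0 C := fun V => by
    refine mem_closedBall_zero_iff.mpr ((hint V).norm_toContinuousMapDual_le.trans ?_)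
    refine ENNReal.toReal_le_coe_of_le_coe ((hC (u V)).trans_eq ?_)
    rw [eLpNorm_one_averageIndicatorLp _ _ (V.isOpen.measure_ne_zero μ ⟨x, V.mem⟩), mul_one]
  obtain ⟨Φ, -, hΦ⟩ := WeakDual.isCompact_closedBall (𝕜 := ℂ) (E := C(X, ℂ)) 0 C
    (le_principal_iff.mpr (mem_map.mpr (Eventually.of_forall hGball)) : map G atBot ≤ _)
  refine ⟨Φ, hΦ.mem_closure_of_forall_mem fun V => ⟨P (u V), hPmem _, fun φ => rfl⟩,
    fun f hf => ?_⟩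
  have hval : ∀ V, G V (star f) = conj (⨍ y in V, f y ∂μ) := fun V =>
    calc G V (star f) = inner ℂ (ContinuousMap.toLp 2 μ ℂ f) (P (u V)) :=
          toContinuousMapDual_star_eq_inner (hint V) f
      _ = conj (inner ℂ (P (u V)) (ContinuousMap.toLp 2 μ ℂ f)) := (inner_conj_symm _ _).symm
      _ = conj (inner ℂ (u V) (ContinuousMap.toLp 2 μ ℂ f)) := by
          rw [← sub_eq_zero.mp ((inner_sub_left _ _ _).symm.trans (hPorth (u V) _ hf))]
      _ = conj (⨍ y in V, f y ∂μ) := by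
          rw [inner_averageIndicatorLp, average_congr (ae_restrict_of_ae
            (ContinuousMap.coeFn_toLp (p := 2) μ (𝕜 := ℂ) f))]
  refine hΦ.apply_eq_of_tendsto (WeakDual.eval_continuous _).continuousAt ?_
  have havg := f.continuous.continuousAt.tendsto_setAverage
    f.continuous.stronglyMeasurable.stronglyMeasurableAtFilter
    (OpenNhdsOf.tendsto_atBot_smallSets x)
    (Eventually.of_forall fun V => V.isOpen.measure_ne_zero μ ⟨x, V.mem⟩)
  simpa [Function.comp_def, hval] using (Complex.continuous_conj.tendsto _).comp havg

/-- Lemma 3.2 (representing measures).  If the orthogonal projection `P` onto the closed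
subspace `H ⊆ L²(X,μ;ℂ)` extends to a bounded operator on `L¹(X,μ)`, then for every
`x ∈ X` there is a functional `Φₓ` in the weak-* closure `M₀` of `J(H)` such that
`Φₓ(conj f) = conj (f x)` for every continuous `f` whose `L²`-class lies in `H`
(i.e. the measure `σₓ` representing `Φₓ` satisfies `∫ f d(conj σₓ) = f x`). -/
theorem stmt_2
    {X : Type*} [TopologicalSpace X] [CompactSpace X] [T2Space X] [ConnectedSpace X]
    [MeasurableSpace X] [BorelSpace X]
    (μ : Measure X) [IsFiniteMeasure μ] [μ.Regular] [μ.IsOpenPosMeasure]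
    (H : Submodule ℂ (Lp ℂ 2 μ)) (hHclosed : IsClosed (H : Set (Lp ℂ 2 μ)))
    (P : Lp ℂ 2 μ → Lp ℂ 2 μ)
    (hPmem : ∀ f, P f ∈ H)
    (hPorth : ∀ f : Lp ℂ 2 μ, ∀ g ∈ H, (inner ℂ (f - P f) g : ℂ) = 0)
    (hbdd : ∃ C : ℝ≥0, ∀ f : Lp ℂ 2 μ,
        eLpNorm (↑↑(P f) : X → ℂ) 1 μ ≤ (C : ℝ≥0∞) * eLpNorm (↑↑f : X → ℂ) 1 μ) :
    ∀ x : X, ∃ Φ ∈ closure {Φ : WeakDual ℂ C(X, ℂ) |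
        ∃ g ∈ H, ∀ φ : C(X, ℂ), Φ φ = ∫ y, φ y * (↑↑g : X → ℂ) y ∂μ},
      ∀ f : C(X, ℂ), (ContinuousMap.toLp 2 μ ℂ f : Lp ℂ 2 μ) ∈ H →
        Φ (star f) = conj (f x) :=
  stmt_2_general μ H P hPmem hPorth hbdd
end

section
/- Proposition (Proposition 3.6, first part). Let K ⊆ ℂ be compact and connected. Then Re(K) = Re(b_out K) and Im(K) = Im(b_out K), where b_out K is the outer boundary of K. -/
open Bornology

/-- The outer boundary of a compact set `K ⊆ ℂ`: the topological frontier of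
`K₁ := ℂ \ U_K`, where `U_K` is the (unique, for `K` compact) unbounded connected
component of `ℂ \ K`, here encoded as the set of points of `Kᶜ` whose connected
component in `Kᶜ` is unbounded. -/
def outerBoundary (K : Set ℂ) : Set ℂ :=
  frontier {z : ℂ | z ∉ K ∧ ¬ IsBounded (connectedComponentIn Kᶜ z)}ᶜ

/-!
`K` lies in the compact set `K₁ = ℂ \ U_K` (here `U_K = unboundedComplement K`), and `∂K₁ ⊆ K`.
On every vertical line meeting `K`, the highest point of `K₁` lies on `∂K₁`, since just above it
one is in `U_K`; so `Re K ⊆ Re ∂K₁ ⊆ Re K`. Horizontal lines and their rightmost points give the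
same for `Im`.
-/

open Set Filter Topology Metric

section UnboundedComplement

variable {E : Type*}

def unboundedComplement [TopologicalSpace E] [Bornology E] (K : Set E) : Set E :=
  {z | z ∉ K ∧ ¬IsBounded (connectedComponentIn Kᶜ z)}

section Topological

variable [TopologicalSpace E] [Bornology E] {K : Set E}

theorem subset_compl_unboundedComplement : K ⊆ (unboundedComplement K)ᶜ :=
  fun _ hz hU ↦ hU.1 hz

variable [LocallyConnectedSpace E]

theorem isOpen_unboundedComplement (hK : IsClosed K) : IsOpen (unboundedComplement K) := by
  refine isOpen_iff_forall_mem_open.2 fun z hz ↦ ⟨connectedComponentIn Kᶜ z, fun w hw ↦ ?_,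
    hK.isOpen_compl.connectedComponentIn, mem_connectedComponentIn hz.1⟩
  exact ⟨connectedComponentIn_subset _ _ hw, connectedComponentIn_eq hw ▸ hz.2⟩

/-- Outside `K`, a point of `(unboundedComplement K)ᶜ` has a bounded component, which is an open
neighbourhood of it inside `(unboundedComplement K)ᶜ`. -/
theorem frontier_compl_unboundedComplement_subset (hK : IsClosed K) :
    frontier (unboundedComplement K)ᶜ ⊆ K := by
  intro z hz
  by_contra hzK
  have hzK₁ : z ∈ (unboundedComplement K)ᶜ :=
    (isOpen_unboundedComplement hK).isClosed_compl.frontier_subset hz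
  have hbdd : IsBounded (connectedComponentIn Kᶜ z) := not_not.1 fun h ↦ hzK₁ ⟨hzK, h⟩
  have hsub : connectedComponentIn Kᶜ z ⊆ (unboundedComplement K)ᶜ :=
    fun w hw hwU ↦ hwU.2 (connectedComponentIn_eq hw ▸ hbdd)
  exact hz.2 (mem_interior.2 ⟨_, hsub, hK.isOpen_compl.connectedComponentIn,
    mem_connectedComponentIn hzK⟩)

end Topological

section Normed

variable [NormedAddCommGroup E] [NormedSpace ℝ E] {K : Set E}

theorem not_isBounded_image_smul_Ici {z : E} (hz : z ≠ 0) (a : ℝ) :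
    ¬IsBounded ((· • z) '' Ici a) := by
  intro hb
  have hlim : Tendsto (fun t : ℝ ↦ t • z) atTop (cobounded E) := by
    rw [← tendsto_norm_atTop_iff_cobounded]
    simpa only [norm_smul, Real.norm_eq_abs] using
      tendsto_abs_atTop_atTop.atTop_mul_const (norm_pos_iff.2 hz)
  obtain ⟨t, hout, ht⟩ :=
    ((hlim.eventually (isBounded_def.1 hb)).and (eventually_ge_atTop a)).exists
  exact hout (mem_image_of_mem _ ht)

/-- Far from `K`, the ray through `z` is an unbounded connected subset of `Kᶜ`. -/
theorem isBounded_compl_unboundedComplement (hK : IsBounded K) :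
    IsBounded (unboundedComplement K)ᶜ := by
  obtain ⟨r, hr, hKr⟩ := hK.subset_closedBall_lt 0 0
  refine (isBounded_closedBall (x := (0 : E)) (r := r)).subset
    fun z hz ↦ not_not.1 fun hzr ↦ hz ?_
  have hrz : r < ‖z‖ := by simpa using hzr
  have hray : (· • z) '' Ici (1 : ℝ) ⊆ Kᶜ := by
    rintro _ ⟨t, ht, rfl⟩ htK
    have := hKr htK
    rw [mem_closedBall_zero_iff, norm_smul, Real.norm_of_nonneg (zero_le_one.trans ht)] at this
    nlinarith [mem_Ici.1 ht]
  have hzray : z ∈ (· • z) '' Ici (1 : ℝ) := ⟨1, self_mem_Ici, one_smul ℝ z⟩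
  refine ⟨hray hzray, fun hb ↦ ?_⟩
  exact not_isBounded_image_smul_Ici (norm_pos_iff.1 (hr.trans hrz)) 1 (hb.subset
    ((isPreconnected_Ici.image _ (continuous_id.smul continuous_const).continuousOn)
      |>.subset_connectedComponentIn hzray hray))

end Normed

end UnboundedComplement

theorem IsCompact.image_subset_image_frontier {E : Type*} [AddCommGroup E] [Module ℝ E]
    [TopologicalSpace E] [ContinuousAdd E] [ContinuousSMul ℝ E] {S : Set E} (hS : IsCompact S)
    {f g : E → ℝ} (hf : Continuous f) (hg : ContinuousOn g S) (v : E)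
    (hfv : ∀ z (t : ℝ), f (z + t • v) = f z) (hgv : ∀ z, ∀ t > (0 : ℝ), g z < g (z + t • v)) :
    f '' S ⊆ f '' frontier S := by
  rintro _ ⟨z₀, hz₀, rfl⟩
  have hfiber : IsCompact (S ∩ f ⁻¹' {f z₀}) := hS.inter_right (isClosed_singleton.preimage hf)
  obtain ⟨z, ⟨hzS, hzf⟩, hmax⟩ :=
    hfiber.exists_isMaxOn ⟨z₀, hz₀, rfl⟩ (hg.mono inter_subset_left)
  have hpush : ∀ t > (0 : ℝ), z + t • v ∈ Sᶜ := fun t ht hS' ↦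
    (hgv z t ht).not_ge (hmax ⟨hS', (hfv z t).trans hzf⟩)
  have hlim : Tendsto (fun t : ℝ ↦ z + t • v) (𝓝[>] 0) (𝓝 z) := by
    simpa using ((show Continuous fun t : ℝ ↦ z + t • v by fun_prop).tendsto 0).mono_left
      nhdsWithin_le_nhds
  refine ⟨z, ?_, hzf⟩
  rw [frontier_eq_closure_inter_closure]
  exact ⟨subset_closure hzS, mem_closure_of_tendsto hlim (eventually_nhdsWithin_of_forall hpush)⟩

theorem image_eq_image_frontier_compl_unboundedComplement {E : Type*} [NormedAddCommGroup E]
    [NormedSpace ℝ E] [ProperSpace E] {K : Set E} (hK : IsCompact K) {f g : E → ℝ}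
    (hf : Continuous f) (hg : Continuous g) (v : E) (hfv : ∀ z (t : ℝ), f (z + t • v) = f z)
    (hgv : ∀ z, ∀ t > (0 : ℝ), g z < g (z + t • v)) :
    f '' K = f '' frontier (unboundedComplement K)ᶜ := by
  have hK₁ : IsCompact (unboundedComplement K)ᶜ :=
    isCompact_of_isClosed_isBounded (isOpen_unboundedComplement hK.isClosed).isClosed_compl
      (isBounded_compl_unboundedComplement hK.isBounded)
  refine ((image_mono subset_compl_unboundedComplement).trans ?_).antisymm
    (image_mono (frontier_compl_unboundedComplement_subset hK.isClosed))
  exact hK₁.image_subset_image_frontier hf hg.continuousOn v hfv hgv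

theorem stmt_5_general (K : Set ℂ) (hK : IsCompact K) :
    Complex.re '' K = Complex.re '' outerBoundary K ∧
      Complex.im '' K = Complex.im '' outerBoundary K :=
  ⟨image_eq_image_frontier_compl_unboundedComplement hK Complex.continuous_re
      Complex.continuous_im Complex.I (fun z t ↦ by simp) (fun z t ht ↦ by simpa using ht),
    image_eq_image_frontier_compl_unboundedComplement hK Complex.continuous_im
      Complex.continuous_re 1 (fun z t ↦ by simp) (fun z t ht ↦ by simpa using ht)⟩

/-- Proposition 3.6, first part: for a compact connected `K ⊆ ℂ`, the sets of real parts
(resp. imaginary parts) of `K` and of its outer boundary coincide. -/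
theorem stmt_5 (K : Set ℂ) (hK : IsCompact K) (hc : IsConnected K) :
    Complex.re '' K = Complex.re '' outerBoundary K ∧
      Complex.im '' K = Complex.im '' outerBoundary K :=
  stmt_5_general K hK
end

section
/- Proposition (Proposition 3.6, second part). Let K ⊆ ℂ be compact and connected, and assume K is not a singleton (K contains at least two points). Then the outer boundary b_out K is an uncountable set. -/
/-!
Pick `u := b - a` and project along `ℓ z := (z / u).re`, so that `ℓ b = ℓ a + 1`. Since `K` is
connected, every `t ∈ [ℓ a, ℓ a + 1]` is attained as `ℓ z` with `z ∈ K`, and the whole line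
`z + ℝ • (I * u)` lies in the fibre `ℓ⁻¹(t)`. This line is connected and meets `K`, while its far
points lie outside a disc containing `K` and hence (following the radial ray) in `U_K`; so it meets
`∂U_K`, which is the outer boundary. Thus `ℓ` maps the outer boundary onto a nondegenerate interval.
-/

open Bornology

open Set

theorem IsPreconnected.inter_frontier_nonempty {X : Type*} [TopologicalSpace X] {L S : Set X}
    (hL : IsPreconnected L) (hLS : (L ∩ S).Nonempty) (hLS' : (L \ S).Nonempty) :
    (L ∩ frontier S).Nonempty := by
  have := isPreconnected_iff_preconnectedSpace.mp hL
  obtain ⟨⟨x, hxL⟩, hx⟩ : (frontier (((↑) : L → X) ⁻¹' S)).Nonempty := by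
    refine nonempty_frontier_iff.mpr ⟨?_, fun h => ?_⟩
    · obtain ⟨x, hxL, hxS⟩ := hLS
      exact ⟨⟨x, hxL⟩, hxS⟩
    · obtain ⟨y, hyL, hyS⟩ := hLS'
      exact hyS (show (⟨y, hyL⟩ : L) ∈ (↑) ⁻¹' S from h ▸ mem_univ _)
  exact ⟨x, hxL, continuous_subtype_val.frontier_preimage_subset S hx⟩

/-- The set `U_K`. -/
def outerDomain {X : Type*} [TopologicalSpace X] [Bornology X] (K : Set X) : Set X :=
  {z | z ∉ K ∧ ¬ IsBounded (connectedComponentIn Kᶜ z)}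

theorem outerBoundary_eq_frontier_outerDomain (K : Set ℂ) :
    outerBoundary K = frontier (outerDomain K) :=
  frontier_compl _

theorem IsPreconnected.subset_outerDomain {X : Type*} [TopologicalSpace X] [Bornology X]
    {K R : Set X} (hR : IsPreconnected R) (hRb : ¬ IsBounded R) (hRK : R ⊆ Kᶜ) :
    R ⊆ outerDomain K :=
  fun _ hp => ⟨hRK hp, fun hb => hRb (hb.subset (hR.subset_connectedComponentIn hp hRK))⟩

theorem mem_outerDomain_of_lt_norm {E : Type*} [NormedAddCommGroup E] [NormedSpace ℝ E]
    {K : Set E} {r : ℝ} (hr : 0 ≤ r) (hK : K ⊆ Metric.closedBall 0 r) {p : E} (hp : r < ‖p‖) :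
    p ∈ outerDomain K := by
  have hp0 : 0 < ‖p‖ := hr.trans_lt hp
  have hnorm : ∀ s ∈ Ici (1 : ℝ), ‖s • p‖ = s * ‖p‖ := fun s hs => by
    rw [norm_smul, Real.norm_of_nonneg (zero_le_one.trans hs)]
  have hray : IsPreconnected ((· • p) '' Ici (1 : ℝ)) :=
    isPreconnected_Ici.image _ (continuous_id.smul continuous_const).continuousOn
  have hrayK : (· • p) '' Ici (1 : ℝ) ⊆ Kᶜ := by
    rintro _ ⟨s, hs, rfl⟩ hsK
    have := mem_closedBall_zero_iff.mp (hK hsK)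
    rw [hnorm s hs] at this
    nlinarith [mem_Ici.mp hs]
  have hrayb : ¬ IsBounded ((· • p) '' Ici (1 : ℝ)) := by
    intro hb
    obtain ⟨C, hC⟩ := isBounded_iff_forall_norm_le.mp hb
    set s := max 1 ((C + 1) / ‖p‖)
    have hs : s ∈ Ici (1 : ℝ) := mem_Ici.mpr (le_max_left _ _)
    have hCs : C + 1 ≤ s * ‖p‖ := (div_le_iff₀ hp0).mp (le_max_right _ _)
    linarith [hC _ ⟨s, hs, rfl⟩, hnorm s hs]
  exact hray.subset_outerDomain hrayb hrayK ⟨1, mem_Ici.mpr le_rfl, one_smul ℝ p⟩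

theorem IsPreconnected.inter_outerBoundary_nonempty {K L : Set ℂ} (hK : IsBounded K)
    (hL : IsPreconnected L) (hLb : ¬ IsBounded L) (hLK : (L ∩ K).Nonempty) :
    (L ∩ outerBoundary K).Nonempty := by
  obtain ⟨r, hr, hKr⟩ := hK.subset_closedBall_lt 0 0
  obtain ⟨p, hpL, hp⟩ : ∃ p ∈ L, r < ‖p‖ := by
    by_contra! h
    exact hLb (isBounded_iff_forall_norm_le.mpr ⟨r, h⟩)
  obtain ⟨z, hzL, hzK⟩ := hLK
  rw [outerBoundary_eq_frontier_outerDomain]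
  exact hL.inter_frontier_nonempty ⟨p, hpL, mem_outerDomain_of_lt_norm hr.le hKr hp⟩
    ⟨z, hzL, fun hz => hz.1 hzK⟩

theorem not_isBounded_range_add_smul {E : Type*} [NormedAddCommGroup E] [NormedSpace ℝ E]
    (z : E) {v : E} (hv : v ≠ 0) : ¬ IsBounded (range fun s : ℝ => z + s • v) := by
  intro hb
  obtain ⟨C, hC⟩ := isBounded_iff_forall_norm_le.mp hb
  have hv0 : 0 < ‖v‖ := norm_pos_iff.mpr hv
  set s := (|C| + ‖z‖ + 1) / ‖v‖
  have hsv : ‖s • v‖ = |C| + ‖z‖ + 1 := by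
    rw [norm_smul, Real.norm_eq_abs, abs_of_nonneg (by positivity), div_mul_cancel₀ _ hv0.ne']
  have htri : ‖s • v‖ ≤ ‖z + s • v‖ + ‖z‖ := by simpa using norm_sub_le (z + s • v) z
  linarith [hC _ ⟨s, rfl⟩, le_abs_self C]

/-- Proposition 3.6, second part: the outer boundary of a compact connected subset of `ℂ`
which is not a singleton is uncountable. -/
theorem stmt_6 (K : Set ℂ) (hK : IsCompact K) (hc : IsConnected K)
    (h2 : ∃ a ∈ K, ∃ b ∈ K, a ≠ b) :
    ¬ (outerBoundary K).Countable := by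
  obtain ⟨a, ha, b, hb, hab⟩ := h2
  have hu : b - a ≠ 0 := sub_ne_zero.mpr hab.symm
  set ℓ : ℂ → ℝ := fun z => (z / (b - a)).re
  have hℓb : ℓ b = ℓ a + 1 := by
    have : b / (b - a) = a / (b - a) + 1 := by field_simp; ring
    simp only [ℓ, this, Complex.add_re, Complex.one_re]
  have hℓline : ∀ (z : ℂ) (s : ℝ), ℓ (z + s • (Complex.I * (b - a))) = ℓ z := by
    intro z s
    have : s • (Complex.I * (b - a)) / (b - a) = s * Complex.I := by
      rw [Complex.real_smul]; field_simp
    simp only [ℓ, add_div, this, Complex.add_re, Complex.re_ofReal_mul, Complex.I_re, mul_zero,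
      add_zero]
  have hcover : Icc (ℓ a) (ℓ a + 1) ⊆ ℓ '' outerBoundary K := by
    intro t ht
    obtain ⟨z, hzK, rfl⟩ :=
      hc.isPreconnected.intermediate_value ha hb (by fun_prop) (hℓb ▸ ht)
    obtain ⟨_, ⟨s, rfl⟩, hw⟩ := (isPreconnected_range (by fun_prop)).inter_outerBoundary_nonempty
      hK.isBounded (not_isBounded_range_add_smul z (mul_ne_zero Complex.I_ne_zero hu))
      ⟨z, ⟨0, by simp⟩, hzK⟩
    exact ⟨_, hw, hℓline z s⟩
  intro hcount
  have hIcc := (hcount.image ℓ).mono hcover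
  rw [← Cardinal.le_aleph0_iff_set_countable, Cardinal.mk_Icc_real (lt_add_one _)] at hIcc
  exact Cardinal.aleph0_lt_continuum.not_ge hIcc
end

section
/- Claim (no atoms for measure solutions of a nondegenerate first-order equation, used in the proofs of Theorem 4.1 and Lemma 4.4). Let U ⊆ ℝ^d be open, x₀ ∈ U, let a₁, …, a_d : U → ℂ and c : U → ℂ be C^∞ functions with (a₁(x₀), …, a_d(x₀)) ≠ 0, and let σ be a regular complex Borel measure on U with finite total variation (encoded as σ = (μ₁ − μ₂) + i(μ₃ − μ₄) for finite regular Borel measures μ₁, μ₂, μ₃, μ₄ on U, with ∫ φ dσ := ∫ φ dμ₁ − ∫ φ dμ₂ + i(∫ φ dμ₃ − ∫ φ dμ₄)). If ∫_U ( Σ_{k=1}^d a_k(x) ∂φ/∂x_k (x) + c(x) φ(x) ) dσ(x) = 0 for every C^∞ compactly supported function φ : U → ℂ, then σ({x₀}) = 0, i.e. μ₁({x₀}) − μ₂({x₀}) + i(μ₃({x₀}) − μ₄({x₀})) = 0 and moreover the total variation of σ assigns zero mass to {x₀}. -/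
/-!
Test the equation against `φ_ε x = ε • h (ε⁻¹ • (x - x₀))`, where `h = ψ • ℓ` is a bump
function times the `k`-th coordinate form, so that `h 0 = 0` and `Dh 0 = ℓ`. Since
`Dφ_ε x = Dh (ε⁻¹ • (x - x₀))` and `‖φ_ε‖ ≤ ε ‖h‖∞`, the functions `L φ_ε` are uniformly bounded,
vanish outside a ball of radius `O(ε)` about `x₀`, and equal `a_k(x₀)` at `x₀`. Dominated
convergence then turns `0 = ∫ L φ_ε dσ` into `σ {x₀} * a_k(x₀) = 0` as `ε → 0⁺`.
-/

open MeasureTheory Metric Filter Topology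

theorem tendsto_integral_of_concentrating {α ι F : Type*} [MeasurableSpace α]
    [MeasurableSingletonClass α] [NormedAddCommGroup F] [NormedSpace ℝ F] [CompleteSpace F]
    {l : Filter ι} [l.IsCountablyGenerated] {μ : Measure α} [IsFiniteMeasure μ] {g : ι → α → F}
    {x₀ : α} {w : F} {B : ℝ} (hmeas : ∀ᶠ i in l, AEStronglyMeasurable (g i) μ)
    (hbound : ∀ᶠ i in l, ∀ x, ‖g i x‖ ≤ B) (hx₀ : ∀ᶠ i in l, g i x₀ = w)
    (hoff : ∀ x ≠ x₀, ∀ᶠ i in l, g i x = 0) :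
    Tendsto (fun i ↦ ∫ x, g i x ∂μ) l (𝓝 (μ.real {x₀} • w)) := by
  have hlim : ∀ x, Tendsto (fun i ↦ g i x) l (𝓝 (({x₀} : Set α).indicator (fun _ ↦ w) x)) := by
    intro x
    rcases eq_or_ne x x₀ with rfl | hx
    · simpa using tendsto_const_nhds.congr' (EventuallyEq.symm hx₀)
    · simpa [hx] using tendsto_const_nhds.congr' (EventuallyEq.symm (hoff x hx))
  have := tendsto_integral_filter_of_dominated_convergence (fun _ ↦ B) hmeas
    (hbound.mono fun i hi ↦ ae_of_all μ hi) (integrable_const B) (ae_of_all μ hlim)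
  rwa [integral_indicator (measurableSet_singleton x₀), setIntegral_const] at this

section FirstOrderOperator

variable {E : Type*} [NormedAddCommGroup E] [NormedSpace ℝ E] {ι : Type*} [Fintype ι]

noncomputable def firstOrderOp (v : ι → E) (a : ι → E → ℂ) (c : E → ℂ) (φ : E → ℂ) : E → ℂ :=
  fun x ↦ (∑ j, a j x * fderiv ℝ φ x (v j)) + c x * φ x

variable {v : ι → E} {a : ι → E → ℂ} {c : E → ℂ} {φ : E → ℂ}

theorem firstOrderOp_eq_zero_of_notMem_tsupport {x : E} (hx : x ∉ tsupport φ) :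
    firstOrderOp v a c φ x = 0 := by
  have hφ : φ x = 0 := image_eq_zero_of_notMem_tsupport hx
  have hDφ : fderiv ℝ φ x = 0 :=
    image_eq_zero_of_notMem_tsupport fun h ↦ hx (tsupport_fderiv_subset ℝ h)
  simp [firstOrderOp, hφ, hDφ]

theorem tsupport_firstOrderOp_subset : tsupport (firstOrderOp v a c φ) ⊆ tsupport φ :=
  closure_minimal (fun _ hx ↦ by_contra fun h ↦ hx (firstOrderOp_eq_zero_of_notMem_tsupport h))
    (isClosed_tsupport φ)

theorem continuous_firstOrderOp {U : Set E} (hU : IsOpen U) (ha : ∀ j, ContinuousOn (a j) U)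
    (hc : ContinuousOn c U) (hφ : ContDiff ℝ 1 φ) (hφU : tsupport φ ⊆ U) :
    Continuous (firstOrderOp v a c φ) := by
  refine ContinuousOn.continuous_of_tsupport_subset ?_ hU (tsupport_firstOrderOp_subset.trans hφU)
  have hDφ := (hφ.continuous_fderiv one_ne_zero).continuousOn (s := U)
  exact (continuousOn_finsetSum _ fun j _ ↦ (ha j).mul (hDφ.clm_apply continuousOn_const)).add
    (hc.mul hφ.continuous.continuousOn)

theorem norm_firstOrderOp_le {x : E} {M : ℝ} (hDφ : ‖fderiv ℝ φ x‖ ≤ M) (hφ : ‖φ x‖ ≤ M) :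
    ‖firstOrderOp v a c φ x‖ ≤ (∑ j, ‖a j x‖ * ‖v j‖ + ‖c x‖) * M := by
  have hM : 0 ≤ M := (norm_nonneg _).trans hφ
  have hsum : ‖∑ j, a j x * fderiv ℝ φ x (v j)‖ ≤ (∑ j, ‖a j x‖ * ‖v j‖) * M := by
    rw [Finset.sum_mul]
    refine (norm_sum_le _ _).trans (Finset.sum_le_sum fun j _ ↦ ?_)
    rw [norm_mul, mul_assoc]
    gcongr
    exact ((fderiv ℝ φ x).le_opNorm _).trans (by rw [mul_comm]; gcongr)
  calc ‖firstOrderOp v a c φ x‖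
      ≤ ‖∑ j, a j x * fderiv ℝ φ x (v j)‖ + ‖c x‖ * ‖φ x‖ :=
        (norm_add_le _ _).trans_eq (by rw [norm_mul])
    _ ≤ (∑ j, ‖a j x‖ * ‖v j‖) * M + ‖c x‖ * M := by gcongr
    _ = _ := by ring

end FirstOrderOperator

section Rescaling

variable {E F : Type*} [NormedAddCommGroup E] [NormedSpace ℝ E] [NormedAddCommGroup F]
  [NormedSpace ℝ F]

noncomputable def rescaleAround (x₀ : E) (ε : ℝ) (h : E → F) : E → F :=
  fun x ↦ ε • h (ε⁻¹ • (x - x₀))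

variable {x₀ : E} {ε : ℝ} {h : E → F}

theorem ContDiff.rescaleAround {n : WithTop ℕ∞} (hh : ContDiff ℝ n h) :
    ContDiff ℝ n (rescaleAround x₀ ε h) :=
  (hh.comp ((contDiff_id.sub contDiff_const).const_smul ε⁻¹)).const_smul ε

theorem fderiv_rescaleAround (hε : ε ≠ 0) (hh : Differentiable ℝ h) (x : E) :
    fderiv ℝ (rescaleAround x₀ ε h) x = fderiv ℝ h (ε⁻¹ • (x - x₀)) := by
  have hinner : HasFDerivAt (fun x : E ↦ ε⁻¹ • (x - x₀)) (ε⁻¹ • ContinuousLinearMap.id ℝ E) x :=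
    ((hasFDerivAt_id x).sub_const x₀).const_smul ε⁻¹
  have hD : HasFDerivAt (rescaleAround x₀ ε h)
      (ε • (fderiv ℝ h (ε⁻¹ • (x - x₀))).comp (ε⁻¹ • ContinuousLinearMap.id ℝ E)) x :=
    ((hh _).hasFDerivAt.comp x hinner).const_smul ε
  rw [hD.fderiv]
  ext w
  simp [smul_smul, hε]

theorem tsupport_rescaleAround_subset (hε : 0 < ε) {R : ℝ} (hR : tsupport h ⊆ closedBall 0 R) :
    tsupport (rescaleAround x₀ ε h) ⊆ closedBall x₀ (ε * R) := by
  refine closure_minimal (fun x hx ↦ ?_) isClosed_closedBall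
  have hmem : ε⁻¹ • (x - x₀) ∈ closedBall (0 : E) R :=
    hR (subset_tsupport _ (right_ne_zero_of_smul hx))
  rw [mem_closedBall_zero_iff, norm_smul, Real.norm_of_nonneg (inv_nonneg.2 hε.le),
    inv_mul_le_iff₀ hε] at hmem
  rwa [mem_closedBall_iff_norm]

theorem hasCompactSupport_rescaleAround [ProperSpace E] (hε : 0 < ε) {R : ℝ}
    (hR : tsupport h ⊆ closedBall 0 R) : HasCompactSupport (rescaleAround x₀ ε h) :=
  (isCompact_closedBall x₀ (ε * R)).of_isClosed_subset (isClosed_tsupport _)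
    (tsupport_rescaleAround_subset hε hR)

theorem eventually_tsupport_rescaleAround_subset {K : Set E} (hK : K ∈ 𝓝 x₀) {R : ℝ}
    (hR : tsupport h ⊆ closedBall 0 R) :
    ∀ᶠ ε in 𝓝[>] 0, tsupport (rescaleAround x₀ ε h) ⊆ K := by
  obtain ⟨r, hr, hrK⟩ := nhds_basis_closedBall.mem_iff.1 hK
  have hsmall : ∀ᶠ ε in 𝓝[>] (0 : ℝ), ε * R < r := by
    refine (Tendsto.eventually_lt_const hr ?_).filter_mono nhdsWithin_le_nhds
    simpa using (tendsto_id (x := 𝓝 (0 : ℝ))).mul_const R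
  filter_upwards [hsmall, self_mem_nhdsWithin] with ε hεR hε
  exact (tsupport_rescaleAround_subset hε hR).trans
    ((closedBall_subset_closedBall hεR.le).trans hrK)

end Rescaling

theorem ContDiffBump.fderiv_smul_clm_center {E F : Type*} [NormedAddCommGroup E]
    [NormedSpace ℝ E] [HasContDiffBump E] [NormedAddCommGroup F] [NormedSpace ℝ F] {x₀ : E}
    (ψ : ContDiffBump x₀) (ℓ : E →L[ℝ] F) : fderiv ℝ (fun y ↦ ψ y • ℓ y) x₀ = ℓ := by
  have hψ : (fun y ↦ ψ y • ℓ y) =ᶠ[𝓝 x₀] ℓ := by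
    filter_upwards [closedBall_mem_nhds x₀ ψ.rIn_pos] with y hy
    rw [ψ.one_of_mem_closedBall hy, one_smul]
  rw [hψ.fderiv_eq, ℓ.fderiv]

theorem tendsto_integral_firstOrderOp_rescaleAround {E ι : Type*} [NormedAddCommGroup E]
    [NormedSpace ℝ E] [ProperSpace E] [MeasurableSpace E] [BorelSpace E] [Fintype ι]
    {U : Set E} (hU : IsOpen U) {x₀ : E} (hx₀ : x₀ ∈ U) {v : ι → E} {a : ι → E → ℂ} {c : E → ℂ}
    (ha : ∀ j, ContinuousOn (a j) U) (hc : ContinuousOn c U) {h : E → ℂ} (hh : ContDiff ℝ 1 h)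
    {R : ℝ} (hR : tsupport h ⊆ closedBall 0 R) (h0 : h 0 = 0) (μ : Measure E) [IsFiniteMeasure μ] :
    Tendsto (fun ε ↦ ∫ x, firstOrderOp v a c (rescaleAround x₀ ε h) x ∂μ) (𝓝[>] 0)
      (𝓝 (μ.real {x₀} • ∑ j, a j x₀ * fderiv ℝ h 0 (v j))) := by
  obtain ⟨r, hr, hrU⟩ := nhds_basis_closedBall.mem_iff.1 (hU.mem_nhds hx₀)
  have hcompact : HasCompactSupport h :=
    (isCompact_closedBall 0 R).of_isClosed_subset (isClosed_tsupport _) hR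
  obtain ⟨M₁, hM₁⟩ := (hh.continuous_fderiv one_ne_zero).bounded_above_of_compact_support
    (hcompact.fderiv ℝ)
  obtain ⟨M₀, hM₀⟩ := hh.continuous.bounded_above_of_compact_support hcompact
  obtain ⟨W, hW⟩ := (isCompact_closedBall x₀ r).exists_bound_of_continuousOn
    (f := fun x ↦ ∑ j, ‖a j x‖ * ‖v j‖ + ‖c x‖)
    (((continuousOn_finsetSum _ fun j _ ↦ (ha j).norm.mul continuousOn_const).add hc.norm).mono
      hrU)
  have hW0 : 0 ≤ W := (norm_nonneg _).trans (hW x₀ (mem_closedBall_self hr.le))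
  have hM0 : 0 ≤ max M₁ M₀ := (norm_nonneg _).trans ((hM₀ 0).trans (le_max_right _ _))
  have hsmall : ∀ᶠ ε in 𝓝[>] (0 : ℝ), ε < 1 :=
    (eventually_lt_nhds one_pos).filter_mono nhdsWithin_le_nhds
  refine tendsto_integral_of_concentrating (B := W * max M₁ M₀) ?meas ?bound ?atx₀ ?off
  case meas =>
    filter_upwards [eventually_tsupport_rescaleAround_subset (hU.mem_nhds hx₀) hR] with ε hε
    exact (continuous_firstOrderOp hU ha hc hh.rescaleAround hε).aestronglyMeasurable
  case bound =>
    filter_upwards [eventually_tsupport_rescaleAround_subset (closedBall_mem_nhds x₀ hr) hR,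
      self_mem_nhdsWithin, hsmall] with ε hεr hε hε1 x
    by_cases hx : x ∈ closedBall x₀ r
    · refine (norm_firstOrderOp_le (M := max M₁ M₀) ?_ ?_).trans ?_
      · rw [fderiv_rescaleAround hε.ne' (hh.differentiable one_ne_zero)]
        exact (hM₁ _).trans (le_max_left _ _)
      · rw [rescaleAround, norm_smul, Real.norm_of_nonneg hε.le]
        exact (mul_le_of_le_one_left (norm_nonneg _) hε1.le).trans
          ((hM₀ _).trans (le_max_right _ _))
      · exact mul_le_mul_of_nonneg_right ((le_abs_self _).trans (hW x hx)) hM0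
    · rw [firstOrderOp_eq_zero_of_notMem_tsupport fun h ↦ hx (hεr h), norm_zero]
      exact mul_nonneg hW0 hM0
  case atx₀ =>
    filter_upwards [self_mem_nhdsWithin] with ε hε
    simp [firstOrderOp, fderiv_rescaleAround hε.ne' (hh.differentiable one_ne_zero),
      rescaleAround, h0]
  case off =>
    intro x hx
    filter_upwards [eventually_tsupport_rescaleAround_subset
      (isOpen_compl_singleton.mem_nhds hx.symm) hR] with ε hε
    exact firstOrderOp_eq_zero_of_notMem_tsupport fun hmem ↦ hε hmem rfl

theorem stmt_12_general {d : ℕ} (U : Set (EuclideanSpace ℝ (Fin d))) (hU : IsOpen U)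
    (x₀ : EuclideanSpace ℝ (Fin d)) (hx₀ : x₀ ∈ U)
    (a : Fin d → EuclideanSpace ℝ (Fin d) → ℂ) (c : EuclideanSpace ℝ (Fin d) → ℂ)
    (ha : ∀ k, ContDiffOn ℝ (⊤ : ℕ∞) (a k) U) (hc : ContDiffOn ℝ (⊤ : ℕ∞) c U)
    (hnz : ∃ k, a k x₀ ≠ 0)
    (μ₁ μ₂ μ₃ μ₄ : Measure (EuclideanSpace ℝ (Fin d)))
    [IsFiniteMeasure μ₁] [IsFiniteMeasure μ₂] [IsFiniteMeasure μ₃] [IsFiniteMeasure μ₄]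
    (heq : ∀ φ : EuclideanSpace ℝ (Fin d) → ℂ, ContDiff ℝ (⊤ : ℕ∞) φ →
      HasCompactSupport φ → tsupport φ ⊆ U →
      ∀ g : EuclideanSpace ℝ (Fin d) → ℂ,
        (g = fun x => (∑ k, a k x * fderiv ℝ φ x (EuclideanSpace.single k 1)) + c x * φ x) →
        (∫ x, g x ∂μ₁) - (∫ x, g x ∂μ₂)
          + Complex.I * ((∫ x, g x ∂μ₃) - (∫ x, g x ∂μ₄)) = 0) :
    ((μ₁ {x₀}).toReal : ℂ) - ((μ₂ {x₀}).toReal : ℂ)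
      + Complex.I * (((μ₃ {x₀}).toReal : ℂ) - ((μ₄ {x₀}).toReal : ℂ)) = 0 := by
  obtain ⟨k, hk⟩ := hnz
  let ψ : ContDiffBump (0 : EuclideanSpace ℝ (Fin d)) := ⟨1, 2, one_pos, one_lt_two⟩
  let ℓ : EuclideanSpace ℝ (Fin d) →L[ℝ] ℂ := Complex.ofRealCLM.comp (EuclideanSpace.proj k)
  let h : EuclideanSpace ℝ (Fin d) → ℂ := fun y ↦ ψ y • ℓ y
  have hh : ContDiff ℝ (⊤ : ℕ∞) h := ψ.contDiff.smul ℓ.contDiff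
  have hR : tsupport h ⊆ closedBall 0 ψ.rOut :=
    (tsupport_smul_subset_left _ _).trans ψ.tsupport_eq.subset
  let g (ε : ℝ) := firstOrderOp (fun j ↦ EuclideanSpace.single j 1) a c (rescaleAround x₀ ε h)
  have hlim (μ : Measure (EuclideanSpace ℝ (Fin d))) [IsFiniteMeasure μ] :
      Tendsto (fun ε ↦ ∫ x, g ε x ∂μ) (𝓝[>] 0) (𝓝 (μ.real {x₀} • a k x₀)) := by
    convert tendsto_integral_firstOrderOp_rescaleAround hU hx₀ (fun j ↦ (ha j).continuousOn)
      hc.continuousOn (hh.of_le (by simp)) hR (by simp [h]) μ using 3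
    rw [show fderiv ℝ h 0 = ℓ from ψ.fderiv_smul_clm_center ℓ]
    simp [ℓ, PiLp.single_apply, apply_ite]
  have hzero : Tendsto (fun ε ↦ (∫ x, g ε x ∂μ₁) - (∫ x, g ε x ∂μ₂)
      + Complex.I * ((∫ x, g ε x ∂μ₃) - (∫ x, g ε x ∂μ₄))) (𝓝[>] 0) (𝓝 0) := by
    refine tendsto_const_nhds.congr' ?_
    filter_upwards [eventually_tsupport_rescaleAround_subset (hU.mem_nhds hx₀) hR,
      self_mem_nhdsWithin] with ε hεU hε
    exact (heq _ hh.rescaleAround (hasCompactSupport_rescaleAround hε hR) hεU _ rfl).symm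
  have hatom := tendsto_nhds_unique
    (((hlim μ₁).sub (hlim μ₂)).add (((hlim μ₃).sub (hlim μ₄)).const_mul Complex.I)) hzero
  refine (mul_eq_zero.1 ?_).resolve_right hk
  rw [← hatom]
  simp only [Measure.real, Complex.real_smul]
  ring

/-- No atoms for complex measure solutions of a nondegenerate first-order equation:
if a regular complex Borel measure `σ = (μ₁ - μ₂) + i(μ₃ - μ₄)` on an open set
`U ⊆ ℝ^d` satisfies `∫ (Σₖ aₖ ∂ₖφ + cφ) dσ = 0` for all test functions `φ`, where the
smooth coefficients of the principal part satisfy `(a₁(x₀), …, a_d(x₀)) ≠ 0` at a point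
`x₀ ∈ U`, then `σ({x₀}) = 0`. -/
theorem stmt_12 {d : ℕ} (U : Set (EuclideanSpace ℝ (Fin d))) (hU : IsOpen U)
    (x₀ : EuclideanSpace ℝ (Fin d)) (hx₀ : x₀ ∈ U)
    (a : Fin d → EuclideanSpace ℝ (Fin d) → ℂ) (c : EuclideanSpace ℝ (Fin d) → ℂ)
    (ha : ∀ k, ContDiffOn ℝ (⊤ : ℕ∞) (a k) U) (hc : ContDiffOn ℝ (⊤ : ℕ∞) c U)
    (hnz : ∃ k, a k x₀ ≠ 0)
    (μ₁ μ₂ μ₃ μ₄ : Measure (EuclideanSpace ℝ (Fin d)))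
    [IsFiniteMeasure μ₁] [IsFiniteMeasure μ₂] [IsFiniteMeasure μ₃] [IsFiniteMeasure μ₄]
    [μ₁.Regular] [μ₂.Regular] [μ₃.Regular] [μ₄.Regular]
    (hsupp₁ : μ₁ Uᶜ = 0) (hsupp₂ : μ₂ Uᶜ = 0) (hsupp₃ : μ₃ Uᶜ = 0) (hsupp₄ : μ₄ Uᶜ = 0)
    (heq : ∀ φ : EuclideanSpace ℝ (Fin d) → ℂ, ContDiff ℝ (⊤ : ℕ∞) φ →
      HasCompactSupport φ → tsupport φ ⊆ U →
      ∀ g : EuclideanSpace ℝ (Fin d) → ℂ,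
        (g = fun x => (∑ k, a k x * fderiv ℝ φ x (EuclideanSpace.single k 1)) + c x * φ x) →
        (∫ x, g x ∂μ₁) - (∫ x, g x ∂μ₂)
          + Complex.I * ((∫ x, g x ∂μ₃) - (∫ x, g x ∂μ₄)) = 0) :
    ((μ₁ {x₀}).toReal : ℂ) - ((μ₂ {x₀}).toReal : ℂ)
      + Complex.I * (((μ₃ {x₀}).toReal : ℂ) - ((μ₄ {x₀}).toReal : ℂ)) = 0 :=
  stmt_12_general U hU x₀ hx₀ a c ha hc hnz μ₁ μ₂ μ₃ μ₄ heq
end
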